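/- Let p be a prime with p ≡ 1 (mod 8), and let a, b be integers with a² − p·b² = −1 and b > 0. Then 4 divides a, b ≡ 1 (mod 4), and every prime divisor of b is ≡ 1 (mod 4). -/
import Mathlib

lemma aux_all_factors_one_mod_four : ∀ n : ℕ, 0 < n →
    (∀ q : ℕ, q.Prime → q ∣ n → q % 4 = 1) → n % 4 = 1 := by
  intro n
  induction n using Nat.strong_induction_on with
  | _ n ih =>
    intro hn h
    rcases eq_or_ne n 1 with rfl | h1
    · rfl
    · have hq := Nat.minFac_prime h1
      obtain ⟨m, hm⟩ := Nat.minFac_dvd n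
      have hq4 := h n.minFac hq ⟨m, hm⟩
      have hm0 : 0 < m := by
        rcases Nat.eq_zero_or_pos m with rfl | h'
        · omega
        · exact h'
      have hmlt : m < n := by
        have h1q : 1 < n.minFac := hq.one_lt
        calc m < n.minFac * m := (lt_mul_iff_one_lt_left hm0).2 h1q
        _ = n := hm.symm
      have hm4 := ih m hmlt hm0 (fun r hr hrd => h r hr (hm ▸ hrd.mul_left n.minFac))
      rw [hm, Nat.mul_mod, hq4, hm4]

/-- Let `p` be a prime with `p ≡ 1 (mod 8)`, and let `a`, `b` be integers with
`a² − p·b² = −1` and `b > 0`. Then `4 ∣ a`, `b ≡ 1 (mod 4)`, and every prime divisor of `b`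
is `≡ 1 (mod 4)`. -/
theorem pell_coeffs_of_prime_mod_eight_eq_one
    (p : ℕ) (hp : p.Prime) (hp8 : p % 8 = 1)
    (a b : ℤ) (hab : a ^ 2 - (p : ℤ) * b ^ 2 = -1) (hb : 0 < b) :
    (4 ∣ a) ∧ b % 4 = 1 ∧ ∀ q : ℕ, q.Prime → (q : ℤ) ∣ b → q % 4 = 1 := by
  -- mod 8 analysis
  have hp8' : ((p : ℤ) : ZMod 8) = 1 := by
    have : ((p : ℕ) : ZMod 8) = ((p % 8 : ℕ) : ZMod 8) := (ZMod.natCast_mod p 8).symm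
    push_cast
    rw [this, hp8]
    norm_num
  have h8 : ((a : ZMod 8))^2 + 1 = (b : ZMod 8)^2 := by
    have := congrArg (Int.cast : ℤ → ZMod 8) hab
    push_cast at this
    push_cast at hp8'
    rw [hp8'] at this
    linear_combination this
  have hkey : ∀ x y : ZMod 8, x^2 + 1 = y^2 →
      (x = 0 ∨ x = 4) ∧ (y = 1 ∨ y = 3 ∨ y = 5 ∨ y = 7) := by decide
  obtain ⟨hx, hy⟩ := hkey _ _ h8
  have ha4 : (4 : ℤ) ∣ a := by
    rcases hx with hx | hx
    · have : (8 : ℤ) ∣ a := by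
        rwa [ZMod.intCast_zmod_eq_zero_iff_dvd] at hx
      obtain ⟨k, rfl⟩ := this; exact ⟨2*k, by ring⟩
    · have : ((a - 4 : ℤ) : ZMod 8) = 0 := by push_cast; rw [hx]; ring
      have : (8 : ℤ) ∣ a - 4 := by
        rwa [ZMod.intCast_zmod_eq_zero_iff_dvd] at this
      obtain ⟨k, hk⟩ := this; exact ⟨2*k+1, by omega⟩
  have hbodd : ¬ (2 : ℤ) ∣ b := by
    have : ∃ c : ℤ, c % 2 = 1 ∧ (8 : ℤ) ∣ b - c := by
      rcases hy with hy | hy | hy | hy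
      · refine ⟨1, rfl, ?_⟩
        have h0 : ((b - 1 : ℤ) : ZMod 8) = 0 := by push_cast; rw [hy]; ring
        exact_mod_cast (ZMod.intCast_zmod_eq_zero_iff_dvd _ 8).1 h0
      · refine ⟨3, rfl, ?_⟩
        have h0 : ((b - 3 : ℤ) : ZMod 8) = 0 := by push_cast; rw [hy]; ring
        exact_mod_cast (ZMod.intCast_zmod_eq_zero_iff_dvd _ 8).1 h0
      · refine ⟨5, rfl, ?_⟩
        have h0 : ((b - 5 : ℤ) : ZMod 8) = 0 := by push_cast; rw [hy]; ring
        exact_mod_cast (ZMod.intCast_zmod_eq_zero_iff_dvd _ 8).1 h0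
      · refine ⟨7, rfl, ?_⟩
        have h0 : ((b - 7 : ℤ) : ZMod 8) = 0 := by push_cast; rw [hy]; ring
        exact_mod_cast (ZMod.intCast_zmod_eq_zero_iff_dvd _ 8).1 h0
    obtain ⟨c, hc1, k, hk⟩ := this
    omega
  -- prime divisors of b
  have hqs : ∀ q : ℕ, q.Prime → (q : ℤ) ∣ b → q % 4 = 1 := by
    intro q hq hqb
    have hq2 : q ≠ 2 := by
      rintro rfl
      exact hbodd (by exact_mod_cast hqb)
    have hqodd : q % 2 = 1 := Nat.odd_iff.1 (hq.odd_of_ne_two hq2)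
    haveI : Fact q.Prime := ⟨hq⟩
    have hdvd : (q : ℤ) ∣ a ^ 2 + 1 := by
      have : a ^ 2 + 1 = (p : ℤ) * b ^ 2 := by linarith
      rw [this, sq]
      exact ((hqb.mul_right b).mul_left _)
    have hsq : IsSquare (-1 : ZMod q) := by
      refine ⟨(a : ZMod q), ?_⟩
      have : ((a ^ 2 + 1 : ℤ) : ZMod q) = 0 := by
        rwa [ZMod.intCast_zmod_eq_zero_iff_dvd]
      push_cast at this
      linear_combination -this
    have := (ZMod.exists_sq_eq_neg_one_iff (p := q)).1 hsq
    omega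
  refine ⟨ha4, ?_, hqs⟩
  -- b % 4 = 1
  have hball : ∀ q : ℕ, q.Prime → q ∣ b.natAbs → q % 4 = 1 := by
    intro q hq hqd
    have h' : (q : ℤ) ∣ (b.natAbs : ℤ) := Int.natCast_dvd_natCast.2 hqd
    rw [Int.natAbs_of_nonneg hb.le] at h'
    exact hqs q hq h'
  have := aux_all_factors_one_mod_four b.natAbs (by omega) hball
  omega
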